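/- Let α, α' ∈ L²([0,1];𝔤) and let a, a' be their images under the rolling map (solutions of a'(t)a(t)^{-1} = −α(t), a(0)=1). If α_n → α in L², then the corresponding solutions a_n converge uniformly on [0,1] to a; in particular a_n(1) → a(1) in G. -/

import Mathlib

open MeasureTheory Set Filter

/-!
Subtracting the two integral equations gives, with `K` a bound for `‖a‖` on `[0,1]`,
`‖aₙ t - a t‖ ≤ K ‖αₙ - α‖₁ + ∫₀ᵗ ‖αₙ‖ ‖aₙ - a‖`.
A Grönwall argument on a uniform partition of `[0,1]`, fine enough that every cell carries
`‖αₙ‖`-mass at most `1/2` for all large `n`, turns this into `‖aₙ - a‖ ≤ C ‖αₙ - α‖₁` on `[0,1]`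
with `C` independent of `n`, and `‖αₙ - α‖₁ ≤ ‖αₙ - α‖₂ → 0`.
-/

theorem IntervalIntegrable.mono_of_mem_Icc {E : Type*} [NormedAddCommGroup E] {f : ℝ → E}
    {μ : Measure ℝ} {a b u v : ℝ} (hf : IntervalIntegrable f μ a b) (hu : u ∈ Icc a b)
    (hv : v ∈ Icc a b) : IntervalIntegrable f μ u v := by
  have hab : a ≤ b := hu.1.trans hu.2
  rw [← uIcc_of_le hab] at hu hv
  exact hf.mono_set (uIcc_subset_uIcc hu hv)

theorem norm_mul_sub_mul_le {A : Type*} [NormedRing A] (α β x y : A) :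
    ‖β * y - α * x‖ ≤ ‖α - β‖ * ‖y‖ + ‖α‖ * ‖x - y‖ := by
  calc ‖β * y - α * x‖ = ‖-((α - β) * y + α * (x - y))‖ := by congr 1; noncomm_ring
    _ ≤ ‖(α - β) * y‖ + ‖α * (x - y)‖ := (norm_neg _).trans_le (norm_add_le _ _)
    _ ≤ _ := add_le_add (norm_mul_le _ _) (norm_mul_le _ _)

theorem norm_sub_le_of_eq_sub_integral_mul {A : Type*} [NormedRing A] [NormedSpace ℝ A]
    {α β a b : ℝ → A} {x : A} {K t : ℝ}
    (hα : IntervalIntegrable α volume 0 1) (hβ : IntervalIntegrable β volume 0 1)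
    (ha : ContinuousOn a (Icc 0 1)) (hb : ContinuousOn b (Icc 0 1))
    (hK : ∀ s ∈ Icc (0:ℝ) 1, ‖b s‖ ≤ K) (ht : t ∈ Icc (0:ℝ) 1)
    (hat : a t = x - ∫ s in (0:ℝ)..t, α s * a s) (hbt : b t = x - ∫ s in (0:ℝ)..t, β s * b s) :
    ‖a t - b t‖ ≤ K * (∫ s in (0:ℝ)..1, ‖α s - β s‖) + ∫ s in (0:ℝ)..t, ‖α s‖ * ‖a s - b s‖ := by
  have h0 : (0:ℝ) ∈ Icc (0:ℝ) 1 := ⟨le_rfl, zero_le_one⟩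
  have hK0 : 0 ≤ K := (norm_nonneg _).trans (hK 0 h0)
  have hsub : uIcc 0 t ⊆ Icc (0:ℝ) 1 := by
    rw [uIcc_of_le ht.1]; exact Icc_subset_Icc le_rfl ht.2
  have hαt := hα.mono_of_mem_Icc h0 ht
  have hβt := hβ.mono_of_mem_Icc h0 ht
  have hαa := hαt.mul_continuousOn (ha.mono hsub)
  have hβb := hβt.mul_continuousOn (hb.mono hsub)
  have hδ : IntervalIntegrable (fun s => ‖α s - β s‖) volume 0 t := (hαt.sub hβt).norm
  have hrest : IntervalIntegrable (fun s => ‖α s‖ * ‖a s - b s‖) volume 0 t :=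
    hαt.norm.mul_continuousOn ((ha.sub hb).norm.mono hsub)
  have hdiff : a t - b t = ∫ s in (0:ℝ)..t, (β s * b s - α s * a s) := by
    rw [intervalIntegral.integral_sub hβb hαa, hat, hbt]
    abel
  calc ‖a t - b t‖ ≤ ∫ s in (0:ℝ)..t, ‖β s * b s - α s * a s‖ := by
        rw [hdiff]; exact intervalIntegral.norm_integral_le_integral_norm ht.1
    _ ≤ ∫ s in (0:ℝ)..t, (K * ‖α s - β s‖ + ‖α s‖ * ‖a s - b s‖) := by
        refine intervalIntegral.integral_mono_on ht.1 (hβb.sub hαa).norm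
          ((hδ.const_mul K).add hrest) fun s hs => ?_
        have hbs := hK s (hsub (uIcc_of_le ht.1 ▸ Icc_subset_uIcc hs))
        calc _ ≤ ‖α s - β s‖ * ‖b s‖ + ‖α s‖ * ‖a s - b s‖ := norm_mul_sub_mul_le _ _ _ _
          _ ≤ ‖α s - β s‖ * K + ‖α s‖ * ‖a s - b s‖ := by gcongr
          _ = _ := by ring
    _ ≤ K * (∫ s in (0:ℝ)..1, ‖α s - β s‖) + ∫ s in (0:ℝ)..t, ‖α s‖ * ‖a s - b s‖ := by
        rw [intervalIntegral.integral_add (hδ.const_mul K) hrest,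
          intervalIntegral.integral_const_mul]
        gcongr
        exact intervalIntegral.integral_mono_interval le_rfl ht.1 ht.2
          (ae_of_all _ fun s => norm_nonneg _) (hα.sub hβ).norm

theorem integral_mul_le_integral_mul_of_le {k φ : ℝ → ℝ} {u v c : ℝ} (huv : u ≤ v)
    (hk : IntervalIntegrable k volume u v) (hk0 : ∀ s, 0 ≤ k s) (hφ : ContinuousOn φ (Icc u v))
    (hc : ∀ s ∈ Icc u v, φ s ≤ c) :
    ∫ s in u..v, k s * φ s ≤ (∫ s in u..v, k s) * c := by
  rw [← intervalIntegral.integral_mul_const]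
  exact intervalIntegral.integral_mono_on huv (hk.mul_continuousOn (by rwa [uIcc_of_le huv]))
    (hk.mul_const c) fun s hs => mul_le_mul_of_nonneg_left (hc s hs) (hk0 s)

section Gronwall

variable {k φ : ℝ → ℝ} {C B : ℝ}
  (hk : IntervalIntegrable k volume 0 1) (hk0 : ∀ s, 0 ≤ k s)
  (hφ : ContinuousOn φ (Icc 0 1)) (hφ0 : ∀ s, 0 ≤ φ s) (hB : ∫ s in (0:ℝ)..1, k s ≤ B)
  (hle : ∀ t ∈ Icc (0:ℝ) 1, φ t ≤ C + ∫ s in (0:ℝ)..t, k s * φ s)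
include hk hk0 hφ hφ0 hB hle

/- At a maximum point `z` of `φ` on `[0, T]` beyond `p`, the integral over `[p, z]` is at most
`φ z / 2` and can be absorbed into the left-hand side. -/
theorem le_mul_of_le_add_integral_mul {p T M : ℝ} (hp : 0 ≤ p) (hpT : p ≤ T) (hT : T ≤ 1)
    (hsmall : ∫ s in p..T, k s ≤ 2⁻¹) (hCM : C ≤ M) (hM : ∀ t ∈ Icc 0 p, φ t ≤ M) :
    ∀ t ∈ Icc 0 T, φ t ≤ (2 * B + 3) * M := by
  have hM0 : 0 ≤ M := (hφ0 0).trans (hM 0 ⟨le_rfl, hp⟩)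
  have hB0 : 0 ≤ B := (intervalIntegral.integral_nonneg zero_le_one fun s _ => hk0 s).trans hB
  obtain ⟨z, hz, hzmax⟩ := isCompact_Icc.exists_isMaxOn ⟨0, le_rfl, hp.trans hpT⟩
    (hφ.mono (Icc_subset_Icc le_rfl hT))
  intro t ht
  refine (hzmax ht).trans ?_
  rcases le_or_gt z p with hzp | hzp
  · nlinarith [hM z ⟨hz.1, hzp⟩]
  have h0 : (0:ℝ) ∈ Icc (0:ℝ) 1 := ⟨le_rfl, zero_le_one⟩
  have hp1 : p ∈ Icc (0:ℝ) 1 := ⟨hp, hpT.trans hT⟩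
  have hz1 : z ∈ Icc (0:ℝ) 1 := ⟨hz.1, hz.2.trans hT⟩
  have hkφ : IntervalIntegrable (fun s => k s * φ s) volume 0 1 :=
    hk.mul_continuousOn (by rwa [uIcc_of_le zero_le_one])
  have hhead : ∫ s in (0:ℝ)..p, k s * φ s ≤ B * M := by
    refine (integral_mul_le_integral_mul_of_le hp (hk.mono_of_mem_Icc h0 hp1) hk0
      (hφ.mono (Icc_subset_Icc le_rfl hp1.2)) hM).trans (mul_le_mul_of_nonneg_right ?_ hM0)
    exact (intervalIntegral.integral_mono_interval le_rfl hp hp1.2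
      (ae_of_all _ fun s => hk0 s) hk).trans hB
  have htail : ∫ s in p..z, k s * φ s ≤ 2⁻¹ * φ z := by
    refine (integral_mul_le_integral_mul_of_le hzp.le (hk.mono_of_mem_Icc hp1 hz1) hk0
      (hφ.mono (Icc_subset_Icc hp hz1.2)) fun s hs => hzmax ⟨hp.trans hs.1, hs.2.trans hz.2⟩).trans
      (mul_le_mul_of_nonneg_right ?_ (hφ0 z))
    exact (intervalIntegral.integral_mono_interval le_rfl hzp.le hz.2
      (ae_of_all _ fun s => hk0 s) (hk.mono_of_mem_Icc hp1 ⟨hp.trans hpT, hT⟩)).trans hsmall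
  have hsplit := intervalIntegral.integral_add_adjacent_intervals
    (hkφ.mono_of_mem_Icc h0 hp1) (hkφ.mono_of_mem_Icc hp1 hz1)
  linarith [hle z hz1]

theorem le_pow_mul_of_le_add_integral_mul {m : ℕ} (hm : 0 < m)
    (hmesh : ∀ u v, 0 ≤ u → u ≤ v → v ≤ 1 → v - u ≤ (m : ℝ)⁻¹ → ∫ s in u..v, k s ≤ 2⁻¹) :
    ∀ t ∈ Icc (0:ℝ) 1, φ t ≤ (2 * B + 3) ^ m * C := by
  have hC : 0 ≤ C := by simpa using (hφ0 0).trans (hle 0 ⟨le_rfl, zero_le_one⟩)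
  have hB0 : 0 ≤ B := (intervalIntegral.integral_nonneg zero_le_one fun s _ => hk0 s).trans hB
  have hm' : (0:ℝ) < m := Nat.cast_pos.mpr hm
  have hcells : ∀ i ≤ m, ∀ t ∈ Icc (0:ℝ) (i / m), φ t ≤ (2 * B + 3) ^ i * C := by
    intro i
    induction i with
    | zero =>
      intro _ t ht
      obtain rfl : t = 0 := le_antisymm (by simpa using ht.2) ht.1
      simpa using hle 0 ⟨le_rfl, zero_le_one⟩
    | succ i ih =>
      intro hi
      have hT : ((i + 1 : ℕ) : ℝ) / m ≤ 1 := by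
        rw [div_le_one hm']; exact_mod_cast hi
      have hpT : (i : ℝ) / m ≤ ((i + 1 : ℕ) : ℝ) / m := by
        gcongr; exact_mod_cast i.le_succ
      have hlen : ((i + 1 : ℕ) : ℝ) / m - i / m ≤ (m : ℝ)⁻¹ := by
        push_cast; rw [add_div, add_sub_cancel_left, one_div]
      rw [pow_succ', mul_assoc]
      exact le_mul_of_le_add_integral_mul hk hk0 hφ hφ0 hB hle (by positivity) hpT hT
        (hmesh _ _ (by positivity) hpT hT hlen)
        (le_mul_of_one_le_left hC (one_le_pow₀ (by linarith))) (ih (Nat.le_of_succ_le hi))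
  intro t ht
  exact hcells m le_rfl t (by rwa [div_self hm'.ne'])

end Gronwall

theorem exists_nat_forall_integral_lt {f : ℝ → ℝ} (hf : IntervalIntegrable f volume 0 1) {ε : ℝ}
    (hε : 0 < ε) : ∃ m : ℕ, 0 < m ∧ ∀ u v, 0 ≤ u → u ≤ v → v ≤ 1 → v - u ≤ (m : ℝ)⁻¹ →
      ∫ s in u..v, f s < ε := by
  have hF : ContinuousOn (fun t => ∫ s in (0:ℝ)..t, f s) (Icc 0 1) := by
    simpa [uIcc_of_le zero_le_one] using
      intervalIntegral.continuousOn_primitive_interval ((intervalIntegrable_iff').mp hf)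
  obtain ⟨δ, hδ, hFδ⟩ := Metric.uniformContinuousOn_iff.mp
    (isCompact_Icc.uniformContinuousOn_of_continuous hF) ε hε
  obtain ⟨m, hm⟩ := exists_nat_one_div_lt hδ
  refine ⟨m + 1, m.succ_pos, fun u v hu huv hv hlen => ?_⟩
  have h0 : (0:ℝ) ∈ Icc (0:ℝ) 1 := ⟨le_rfl, zero_le_one⟩
  have hu' : u ∈ Icc (0:ℝ) 1 := ⟨hu, huv.trans hv⟩
  have hv' : v ∈ Icc (0:ℝ) 1 := ⟨hu.trans huv, hv⟩
  have hdist : dist v u < δ := by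
    rw [Real.dist_eq, abs_of_nonneg (sub_nonneg.mpr huv)]
    push_cast at hlen
    linarith [one_div (m + 1 : ℝ)]
  rw [← intervalIntegral.integral_interval_sub_left (hf.mono_of_mem_Icc h0 hv')
    (hf.mono_of_mem_Icc h0 hu')]
  exact (le_abs_self _).trans_lt (hFδ v hv' u hu' hdist)

theorem integral_norm_le_integral_norm_add {E : Type*} [NormedAddCommGroup E] {f g : ℝ → E}
    (hf : IntervalIntegrable f volume 0 1) (hg : IntervalIntegrable g volume 0 1) {u v : ℝ}
    (hu : 0 ≤ u) (huv : u ≤ v) (hv : v ≤ 1) :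
    ∫ s in u..v, ‖f s‖ ≤ (∫ s in u..v, ‖g s‖) + ∫ s in (0:ℝ)..1, ‖f s - g s‖ := by
  have hu' : u ∈ Icc (0:ℝ) 1 := ⟨hu, huv.trans hv⟩
  have hv' : v ∈ Icc (0:ℝ) 1 := ⟨hu.trans huv, hv⟩
  have hgi := (hg.mono_of_mem_Icc hu' hv').norm
  have hδi := ((hf.sub hg).mono_of_mem_Icc hu' hv').norm
  calc ∫ s in u..v, ‖f s‖ ≤ ∫ s in u..v, (‖g s‖ + ‖f s - g s‖) :=
        intervalIntegral.integral_mono_on huv (hf.mono_of_mem_Icc hu' hv').norm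
          (hgi.add hδi) fun s _ => norm_le_norm_add_norm_sub' (f s) (g s)
    _ ≤ (∫ s in u..v, ‖g s‖) + ∫ s in (0:ℝ)..1, ‖f s - g s‖ := by
        rw [intervalIntegral.integral_add hgi hδi]
        gcongr
        exact intervalIntegral.integral_mono_interval hu huv hv
          (ae_of_all _ fun s => norm_nonneg _) (hf.sub hg).norm

theorem integral_norm_le_sqrt_integral_norm_sq {E : Type*} [NormedAddCommGroup E] {f : ℝ → E}
    (hf : MemLp f 2 (volume.restrict (Icc 0 1))) :
    ∫ t in (0:ℝ)..1, ‖f t‖ ≤ √(∫ t in (0:ℝ)..1, ‖f t‖ ^ 2) := by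
  have hpq : Real.HolderConjugate 2 2 := ⟨by norm_num, by norm_num, by norm_num⟩
  have h := integral_mul_le_Lp_mul_Lq_of_nonneg hpq (ae_of_all _ fun t => norm_nonneg (f t))
    (ae_of_all _ fun _ => zero_le_one) (by simpa using hf.norm) (memLp_const (1:ℝ))
  simp only [intervalIntegral.integral_of_le zero_le_one, ← integral_Icc_eq_integral_Ioc]
  simpa [Real.sqrt_eq_rpow] using h

theorem tendsto_integral_norm_of_tendsto_integral_norm_sq {ι E : Type*} [NormedAddCommGroup E]
    {l : Filter ι} {f : ι → ℝ → E} (hf : ∀ i, MemLp (f i) 2 (volume.restrict (Icc 0 1)))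
    (h : Tendsto (fun i => ∫ t in (0:ℝ)..1, ‖f i t‖ ^ 2) l (nhds 0)) :
    Tendsto (fun i => ∫ t in (0:ℝ)..1, ‖f i t‖) l (nhds 0) :=
  squeeze_zero (fun i => intervalIntegral.integral_nonneg zero_le_one fun _ _ => norm_nonneg _)
    (fun i => integral_norm_le_sqrt_integral_norm_sq (hf i)) (by simpa using h.sqrt)

theorem norm_sub_le_pow_mul_integral_norm_sub {A : Type*} [NormedRing A] [NormedSpace ℝ A]
    {α β a b : ℝ → A} {x : A} {K : ℝ} {m : ℕ}
    (hα : IntervalIntegrable α volume 0 1) (hβ : IntervalIntegrable β volume 0 1)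
    (ha : ContinuousOn a (Icc 0 1)) (hb : ContinuousOn b (Icc 0 1))
    (hae : ∀ t ∈ Icc (0:ℝ) 1, a t = x - ∫ s in (0:ℝ)..t, α s * a s)
    (hbe : ∀ t ∈ Icc (0:ℝ) 1, b t = x - ∫ s in (0:ℝ)..t, β s * b s)
    (hK : ∀ s ∈ Icc (0:ℝ) 1, ‖b s‖ ≤ K) (hm : 0 < m)
    (hmesh : ∀ u v, 0 ≤ u → u ≤ v → v ≤ 1 → v - u ≤ (m : ℝ)⁻¹ → ∫ s in u..v, ‖β s‖ < 4⁻¹)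
    (hαβ : ∫ s in (0:ℝ)..1, ‖α s - β s‖ ≤ 4⁻¹) :
    ∀ t ∈ Icc (0:ℝ) 1, ‖a t - b t‖ ≤
      (2 * ((∫ s in (0:ℝ)..1, ‖β s‖) + 4⁻¹) + 3) ^ m * (K * ∫ s in (0:ℝ)..1, ‖α s - β s‖) := by
  refine le_pow_mul_of_le_add_integral_mul hα.norm (fun _ => norm_nonneg _) (ha.sub hb).norm
    (fun _ => norm_nonneg _) ?_ (fun t ht => norm_sub_le_of_eq_sub_integral_mul hα hβ ha hb hK ht
      (hae t ht) (hbe t ht)) hm fun u v hu huv hv hlen => ?_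
  · linarith [integral_norm_le_integral_norm_add hα hβ le_rfl zero_le_one le_rfl]
  · linarith [integral_norm_le_integral_norm_add hα hβ hu huv hv, hmesh u v hu huv hv hlen]

theorem tendstoUniformlyOn_of_norm_sub_le {ι X E : Type*} [SeminormedAddCommGroup E]
    {l : Filter ι} {F : ι → X → E} {f : X → E} {s : Set X} {e : ι → ℝ}
    (he : Tendsto e l (nhds 0)) (h : ∀ᶠ i in l, ∀ x ∈ s, ‖F i x - f x‖ ≤ e i) :
    TendstoUniformlyOn F f l s := by
  refine Metric.tendstoUniformlyOn_iff.mpr fun ε hε => ?_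
  filter_upwards [h, he.eventually (eventually_lt_nhds hε)] with i hi hiε x hx
  rw [dist_comm, dist_eq_norm]
  exact (hi x hx).trans_lt hiε

theorem stmt_16_general {A : Type*} [NormedRing A] [NormedAlgebra ℝ A]
    (α : ℕ → ℝ → A) (αl : ℝ → A)
    (a : ℕ → ℝ → A) (al : ℝ → A)
    (hint : ∀ n, MemLp (α n) 2 (volume.restrict (Icc (0:ℝ) 1)))
    (hintl : MemLp αl 2 (volume.restrict (Icc (0:ℝ) 1)))
    (ha : ∀ n, ContinuousOn (a n) (Icc 0 1) ∧
      ∀ t ∈ Icc (0:ℝ) 1, a n t = 1 - ∫ s in (0:ℝ)..t, α n s * a n s)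
    (hal : ContinuousOn al (Icc 0 1) ∧
      ∀ t ∈ Icc (0:ℝ) 1, al t = 1 - ∫ s in (0:ℝ)..t, αl s * al s)
    (hconv : Tendsto (fun n => ∫ t in (0:ℝ)..1, ‖α n t - αl t‖ ^ 2) atTop (nhds 0)) :
    TendstoUniformlyOn a al atTop (Icc 0 1) ∧
    Tendsto (fun n => a n 1) atTop (nhds (al 1)) := by
  have hαi (n : ℕ) : IntervalIntegrable (α n) volume 0 1 :=
    (intervalIntegrable_iff_integrableOn_Icc_of_le zero_le_one).mpr
      ((hint n).integrable one_le_two)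
  have hαli : IntervalIntegrable αl volume 0 1 :=
    (intervalIntegrable_iff_integrableOn_Icc_of_le zero_le_one).mpr (hintl.integrable one_le_two)
  obtain ⟨K, hK⟩ := isCompact_Icc.exists_bound_of_continuousOn hal.1
  have hd : Tendsto (fun n => ∫ s in (0:ℝ)..1, ‖α n s - αl s‖) atTop (nhds 0) :=
    tendsto_integral_norm_of_tendsto_integral_norm_sq (fun n => (hint n).sub hintl) hconv
  obtain ⟨m, hm, hmesh⟩ := exists_nat_forall_integral_lt hαli.norm (by norm_num : (0:ℝ) < 4⁻¹)
  set C := (2 * ((∫ s in (0:ℝ)..1, ‖αl s‖) + 4⁻¹) + 3) ^ m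
  have hbound : ∀ᶠ n in atTop, ∀ t ∈ Icc (0:ℝ) 1,
      ‖a n t - al t‖ ≤ C * (K * ∫ s in (0:ℝ)..1, ‖α n s - αl s‖) := by
    filter_upwards [hd.eventually (eventually_le_nhds (by norm_num : (0:ℝ) < 4⁻¹))] with n hdn
    exact norm_sub_le_pow_mul_integral_norm_sub (hαi n) hαli (ha n).1 hal.1 (ha n).2 hal.2 hK hm
      hmesh hdn
  have huniform : TendstoUniformlyOn a al atTop (Icc 0 1) :=
    tendstoUniformlyOn_of_norm_sub_le (by simpa using (hd.const_mul K).const_mul C) hbound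
  exact ⟨huniform, huniform.tendsto_at ⟨zero_le_one, le_rfl⟩⟩

/-- Continuity of the rolling map (Lie group modeled as the unit group of a Banach algebra):
if `αₙ → α` in `L²([0,1];𝔤)` and `aₙ`, `a` are the solutions of the integral equation
encoding `ȧ a⁻¹ = −α`, `a(0)=1`, then `aₙ → a` uniformly on `[0,1]`; in particular
`aₙ(1) → a(1)`. -/
theorem stmt_16 {A : Type*} [NormedRing A] [NormedAlgebra ℝ A] [CompleteSpace A]
    (α : ℕ → ℝ → A) (αl : ℝ → A)
    (a : ℕ → ℝ → A) (al : ℝ → A)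
    (hint : ∀ n, MemLp (α n) 2 (volume.restrict (Icc (0:ℝ) 1)))
    (hintl : MemLp αl 2 (volume.restrict (Icc (0:ℝ) 1)))
    (ha : ∀ n, ContinuousOn (a n) (Icc 0 1) ∧
      ∀ t ∈ Icc (0:ℝ) 1, a n t = 1 - ∫ s in (0:ℝ)..t, α n s * a n s)
    (hal : ContinuousOn al (Icc 0 1) ∧
      ∀ t ∈ Icc (0:ℝ) 1, al t = 1 - ∫ s in (0:ℝ)..t, αl s * al s)
    (hconv : Tendsto (fun n => ∫ t in (0:ℝ)..1, ‖α n t - αl t‖ ^ 2) atTop (nhds 0)) :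
    TendstoUniformlyOn a al atTop (Icc 0 1) ∧
    Tendsto (fun n => a n 1) atTop (nhds (al 1)) :=
  stmt_16_general α αl a al hint hintl ha hal hconv
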